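/- A function m₀ on the dual group X satisfying: (T1) m₀ is constant on cosets of G_{-N}^⊥, (T2) m₀ is periodic with every period r₁^{α₁}⋯r_s^{α_s}, (T3) m₀ ≡ 1 on G_{-N}^⊥, is the mask of a refinement equation with solution φ̂ ∈ D_{-N}(G_M^⊥) if and only if ∪_{k=-N+1}^{M+1} E_k A^{M+1−k} = G_{M+1}^⊥ \ G_M^⊥, where E_k ⊆ G_k^⊥ \ G_{k−1}^⊥ is the zero set of m₀ there (equivalently, m₀(χ)·m₀(χA^{−1})⋯m₀(χA^{−M−N}) = 0 for all χ ∈ G_{M+1}^⊥ \ G_M^⊥). -/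

import Mathlib

open MeasureTheory Complex
open scoped ENNReal Classical

noncomputable section

/-- The group of (not necessarily continuous) characters of `G`, with values in the circle. -/
abbrev DualG (G : Type*) [AddCommGroup G] := AddChar G Circle

variable {G : Type*} [AddCommGroup G]

/-- Annihilator of a subgroup `H` in the character group:
`H^⊥ = {χ : χ(x) = 1 for all x ∈ H}`. -/
def ann (H : AddSubgroup G) : Set (DualG G) := {χ : DualG G | ∀ x ∈ H, χ x = 1}

/-- The action of the `n`-th power of the dilation `A` on characters: `(χAⁿ)(x) = χ(Aⁿ x)`. -/
def dilDual (A : AddAut G) (n : ℤ) (χ : DualG G) : DualG G :=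
  χ.compAddMonoidHom (n • A : AddAut G).toAddMonoidHom

variable [MeasurableSpace G]

/-- The Fourier transform `f̂(χ) = ∫ f(x) conj(χ(x)) dμ(x)`. -/
def fourierT (μ : Measure G) (f : G → ℂ) (χ : DualG G) : ℂ :=
  ∫ x, f x * star ((χ x : ℂ)) ∂μ

/-- The set `H₀` of all finite combinations `a₋₁g₋₁ ∔ … ∔ a₋ₛg₋ₛ`, `0 ≤ aⱼ ≤ p-1`,
of the basic elements with negative indices (the analogue of `ℕ`). -/
def H0 (gen : ℤ → G) (p : ℕ) : Set G :=
  {h | ∃ (s : ℕ) (a : ℕ → ℕ), (∀ j, a j < p) ∧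
    h = ∑ j ∈ Finset.range s, a j • gen (-(j : ℤ) - 1)}

/-- The set `H₀⁽ˢ⁾` of combinations using only the generators `g₋₁, …, g₋ₛ`. -/
def H0N (gen : ℤ → G) (p s : ℕ) : Set G :=
  {h | ∃ a : ℕ → ℕ, (∀ j, a j < p) ∧
    h = ∑ j ∈ Finset.range s, a j • gen (-(j : ℤ) - 1)}

/-- `f` is a step function supported in `Gsupp` and constant on cosets of `Gconst`
(the class `𝔇` of the paper: `f ∈ 𝔇_{Gconst}(Gsupp)`). -/
def IsStep (Gsupp Gconst : AddSubgroup G) (f : G → ℂ) : Prop :=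
  (∀ x, x ∉ Gsupp → f x = 0) ∧ ∀ x : G, ∀ g ∈ Gconst, f (x + g) = f x

/-- `F` (a function on the dual group) is supported in the annihilator `Hsupp^⊥` and
constant on cosets of the annihilator `Hconst^⊥`. -/
def IsStepDual (Hsupp Hconst : AddSubgroup G) (F : DualG G → ℂ) : Prop :=
  (∀ χ, χ ∉ ann Hsupp → F χ = 0) ∧
    ∀ χ : DualG G, ∀ η ∈ ann Hconst, F (η * χ) = F χ

/-- The system of shifts of `ψ` by the elements of `H` is orthonormal in `L²(μ)`. -/
def orthShifts (μ : Measure G) (H : Set G) (ψ : G → ℂ) : Prop :=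
  ∀ h ∈ H, ∀ g ∈ H, ∫ x, ψ (x - h) * star (ψ (x - g)) ∂μ = if h = g then 1 else 0

/-- The space `Vₙ`: the closed linear span in `L²(μ)` of the shifts of `φ(Aⁿ ·)`
by the elements of `H`. -/
def Vsp (μ : Measure G) (A : AddAut G) (H : Set G) (φ : G → ℂ) (n : ℤ) :
    Submodule ℂ (Lp ℂ 2 μ) :=
  (Submodule.span ℂ
    {f : Lp ℂ 2 μ | ∃ h ∈ H, ∀ᵐ x ∂μ, f x = φ ((n • A) x - h)}).topologicalClosure

/-- `φ` generates an orthogonal MRA: the spaces `Vₙ` are nested (A1), their union is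
dense and their intersection is trivial (A2), and the `H`-shifts of `φ` form an
orthonormal system spanning `V₀` (A5); axioms A3, A4 hold by the definition of `Vₙ`. -/
def GeneratesMRA (μ : Measure G) (A : AddAut G) (H : Set G) (φ : G → ℂ) : Prop :=
  (∀ n : ℤ, Vsp μ A H φ n ≤ Vsp μ A H φ (n + 1)) ∧
  (⨆ n : ℤ, Vsp μ A H φ n).topologicalClosure = ⊤ ∧
  (⨅ n : ℤ, Vsp μ A H φ n) = ⊥ ∧
  orthShifts μ H φ
/-! Iterating the refinement equation `F(χ) = m₀(χ) F(χA⁻¹)` `M + N + 1` times carries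
`G_{M+1}^⊥` into `G_{-N}^⊥`, where `F = 1`; so on `G_{M+1}^⊥` the solution is the finite product
`∏_{j ≤ M+N} m₀(χA^{-j})`. The support condition `F = 0` off `G_M^⊥` thus says that this product
vanishes on the shell `G_{M+1}^⊥ \ G_M^⊥`, and a zero of its `j`-th factor at `χ` is exactly a point
`χ ∈ E_{M+1-j} A^j`. Conversely, when the product vanishes on the shell, its truncation restricted
to `G_M^⊥` solves the refinement equation. -/

open Finset

section

-- A fresh `G`, so that the ambient `[MeasurableSpace G]` is not pulled into these lemmas.
variable {G : Type*} [AddCommGroup G]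

def annShell (Gsub : ℤ → AddSubgroup G) (k : ℤ) : Set (DualG G) :=
  ann (Gsub k) \ ann (Gsub (k - 1))

lemma annShell_add_one (Gsub : ℤ → AddSubgroup G) (k : ℤ) :
    annShell Gsub (k + 1) = ann (Gsub (k + 1)) \ ann (Gsub k) := by
  rw [annShell, add_sub_cancel_right]

lemma ann_anti {H K : AddSubgroup G} (h : H ≤ K) : ann K ⊆ ann H :=
  fun _ hχ x hx => hχ x (h hx)

lemma mul_mem_ann_iff {H : AddSubgroup G} {η : DualG G} (hη : η ∈ ann H) (χ : DualG G) :
    η * χ ∈ ann H ↔ χ ∈ ann H :=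
  forall₂_congr fun x hx => by rw [AddChar.mul_apply, hη x hx, one_mul]

section dilDual

variable (A : AddAut G)

lemma dilDual_apply (n : ℤ) (χ : DualG G) (x : G) : dilDual A n χ x = χ ((n • A) x) := rfl

@[simp]
lemma dilDual_zero (χ : DualG G) : dilDual A 0 χ = χ := by
  ext x
  simp [dilDual_apply]

lemma dilDual_dilDual (m n : ℤ) (χ : DualG G) :
    dilDual A m (dilDual A n χ) = dilDual A (n + m) χ := by
  ext x
  simp only [dilDual_apply, add_zsmul, AddAut.add_apply]

lemma dilDual_mul (n : ℤ) (η χ : DualG G) :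
    dilDual A n (η * χ) = dilDual A n η * dilDual A n χ := by
  ext x
  simp [dilDual_apply]

lemma dilDual_neg_dilDual (n : ℤ) (χ : DualG G) : dilDual A (-n) (dilDual A n χ) = χ := by
  rw [dilDual_dilDual, add_neg_cancel, dilDual_zero]

variable {Gsub : ℤ → AddSubgroup G} {A}

lemma apply_mem_iff_of_image_eq (hA : ∀ n, (A : G → G) '' Gsub n = Gsub (n - 1)) (m : ℤ)
    (x : G) : A x ∈ Gsub m ↔ x ∈ Gsub (m + 1) := by
  have h := hA (m + 1)
  rw [add_sub_cancel_right] at h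
  rw [← SetLike.mem_coe, ← h, A.injective.mem_set_image, SetLike.mem_coe]

lemma zsmul_apply_mem_iff_of_image_eq (hA : ∀ n, (A : G → G) '' Gsub n = Gsub (n - 1))
    (n m : ℤ) (x : G) : (n • A) x ∈ Gsub m ↔ x ∈ Gsub (m + n) := by
  induction n using Int.induction_on generalizing m x with
  | zero => simp
  | succ i ih =>
    rw [add_one_zsmul, AddAut.add_apply, ih, apply_mem_iff_of_image_eq hA, add_assoc]
  | pred i ih =>
    have hx : x = A ((-A) x) := by simp
    rw [sub_one_zsmul, sub_eq_add_neg, AddAut.add_apply, ih, hx,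
      apply_mem_iff_of_image_eq hA, ← hx, ← add_assoc, neg_add_cancel_right]

lemma dilDual_mem_ann_iff (hA : ∀ n, (A : G → G) '' Gsub n = Gsub (n - 1)) (n m : ℤ)
    (χ : DualG G) : dilDual A n χ ∈ ann (Gsub m) ↔ χ ∈ ann (Gsub (m - n)) := by
  simp only [ann, Set.mem_ofPred_eq, dilDual_apply]
  rw [← (n • A).toEquiv.forall_congr_right (q := fun y => y ∈ Gsub (m - n) → χ y = 1)]
  simp only [AddEquiv.toEquiv_eq_coe, AddEquiv.coe_toEquiv, zsmul_apply_mem_iff_of_image_eq hA,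
    sub_add_cancel]

lemma dilDual_mem_annShell_iff (hA : ∀ n, (A : G → G) '' Gsub n = Gsub (n - 1)) (n k : ℤ)
    (χ : DualG G) : dilDual A n χ ∈ annShell Gsub k ↔ χ ∈ annShell Gsub (k - n) := by
  simp only [annShell, Set.mem_sdiff, dilDual_mem_ann_iff hA, sub_right_comm]

lemma dilDual_neg_mem_ann (hanti : Antitone Gsub)
    (hA : ∀ n, (A : G → G) '' Gsub n = Gsub (n - 1)) {m k j : ℤ} {χ : DualG G}
    (hχ : χ ∈ ann (Gsub m)) (hmkj : m ≤ k + j) : dilDual A (-j) χ ∈ ann (Gsub k) := by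
  rw [dilDual_mem_ann_iff hA, sub_neg_eq_add]
  exact ann_anti (hanti hmkj) hχ

end dilDual

section maskProd

variable (A : AddAut G) (m0 : DualG G → ℂ)

def maskProd (χ : DualG G) (n : ℕ) : ℂ :=
  ∏ j ∈ range n, m0 (dilDual A (-j) χ)

lemma maskProd_succ (χ : DualG G) (n : ℕ) :
    maskProd A m0 χ (n + 1) = maskProd A m0 χ n * m0 (dilDual A (-n) χ) :=
  prod_range_succ _ _

lemma maskProd_succ' (χ : DualG G) (n : ℕ) :
    maskProd A m0 χ (n + 1) = m0 χ * maskProd A m0 (dilDual A (-1) χ) n := by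
  simp only [maskProd, prod_range_succ', dilDual_dilDual, Nat.cast_zero, neg_zero,
    dilDual_zero, Nat.cast_succ, neg_add_rev, mul_comm (m0 χ)]

lemma eq_maskProd_mul_of_refinement {F : DualG G → ℂ}
    (hF : ∀ χ, F χ = m0 χ * F (dilDual A (-1) χ)) (n : ℕ) (χ : DualG G) :
    F χ = maskProd A m0 χ n * F (dilDual A (-n) χ) := by
  induction n generalizing χ with
  | zero => simp [maskProd]
  | succ n ih =>
    rw [hF, ih, maskProd_succ', dilDual_dilDual, Nat.cast_succ, neg_add_rev, mul_assoc]

end maskProd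

section maskZeros

def maskZeros (Gsub : ℤ → AddSubgroup G) (m0 : DualG G → ℂ) (k : ℤ) : Set (DualG G) :=
  {χ | χ ∈ annShell Gsub k ∧ m0 χ = 0}

variable {Gsub : ℤ → AddSubgroup G} {A : AddAut G} (m0 : DualG G → ℂ)

lemma iUnion_dilDual_maskZeros_subset (hA : ∀ n, (A : G → G) '' Gsub n = Gsub (n - 1))
    (L : ℤ) : ⋃ k, dilDual A (L - k) '' maskZeros Gsub m0 k ⊆ annShell Gsub L := by
  simp only [Set.iUnion_subset_iff, Set.image_subset_iff]
  intro k χ hχ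
  rw [Set.mem_preimage, dilDual_mem_annShell_iff hA, sub_sub_cancel]
  exact hχ.1

lemma mem_biUnion_dilDual_maskZeros_iff (hA : ∀ n, (A : G → G) '' Gsub n = Gsub (n - 1))
    {M N : ℕ} {χ : DualG G} (hχ : χ ∈ annShell Gsub (M + 1)) :
    χ ∈ ⋃ k ∈ Icc (-(N : ℤ) + 1) (M + 1), dilDual A (M + 1 - k) '' maskZeros Gsub m0 k ↔
      maskProd A m0 χ (M + N + 1) = 0 := by
  simp only [Set.mem_iUnion, Set.mem_image, exists_prop, mem_Icc, maskProd,
    prod_eq_zero_iff, mem_range]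
  constructor
  · rintro ⟨k, hk, ψ, hψ, rfl⟩
    refine ⟨(M + 1 - k).toNat, by omega, ?_⟩
    rw [Int.toNat_of_nonneg (by omega), dilDual_neg_dilDual]
    exact hψ.2
  · rintro ⟨j, hj, hzero⟩
    refine ⟨M + 1 - j, by omega, dilDual A (-j) χ, ⟨?_, hzero⟩, ?_⟩
    · rwa [dilDual_mem_annShell_iff hA, sub_neg_eq_add, sub_add_cancel]
    · rw [dilDual_dilDual, sub_sub_cancel, neg_add_cancel, dilDual_zero]

lemma biUnion_dilDual_maskZeros_eq_annShell_iff
    (hA : ∀ n, (A : G → G) '' Gsub n = Gsub (n - 1)) (M N : ℕ) :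
    ⋃ k ∈ Icc (-(N : ℤ) + 1) (M + 1), dilDual A (M + 1 - k) '' maskZeros Gsub m0 k =
        annShell Gsub (M + 1) ↔
      ∀ χ ∈ annShell Gsub (M + 1), maskProd A m0 χ (M + N + 1) = 0 := by
  rw [Set.Subset.antisymm_iff, and_iff_right
    ((Set.iUnion₂_subset_iUnion _ _).trans (iUnion_dilDual_maskZeros_subset m0 hA _))]
  exact forall₂_congr fun χ hχ => mem_biUnion_dilDual_maskZeros_iff m0 hA hχ

end maskZeros

section refinement

variable {Gsub : ℤ → AddSubgroup G} {A : AddAut G} {m0 : DualG G → ℂ} {M N : ℕ}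

lemma maskProd_eq_zero_of_refinement (hanti : Antitone Gsub)
    (hA : ∀ n, (A : G → G) '' Gsub n = Gsub (n - 1)) {F : DualG G → ℂ}
    (hFsupp : ∀ χ, χ ∉ ann (Gsub M) → F χ = 0) (hFone : ∀ χ ∈ ann (Gsub (-N)), F χ = 1)
    (hF : ∀ χ, F χ = m0 χ * F (dilDual A (-1) χ)) {χ : DualG G}
    (hχ : χ ∈ annShell Gsub (M + 1)) : maskProd A m0 χ (M + N + 1) = 0 := by
  rw [annShell_add_one] at hχ
  have hlast : F (dilDual A (-(M + N + 1 : ℕ)) χ) = 1 :=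
    hFone _ (dilDual_neg_mem_ann hanti hA hχ.1 (by omega))
  have h := eq_maskProd_mul_of_refinement A m0 hF (M + N + 1) χ
  rwa [hFsupp χ hχ.2, hlast, mul_one, eq_comm] at h

variable (Gsub A m0 M N) in
/-- The solution `φ̂(χ) = ∏_{j ≥ 0} m₀(χA^{-j})`: on `G_M^⊥` the factors with `j ≥ M + N`
are `1` by (T3). -/
def phiHat : DualG G → ℂ :=
  (ann (Gsub M)).indicator fun χ => maskProd A m0 χ (M + N)

lemma isStepDual_phiHat (hanti : Antitone Gsub)
    (hA : ∀ n, (A : G → G) '' Gsub n = Gsub (n - 1))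
    (hT1 : ∀ χ : DualG G, ∀ η ∈ ann (Gsub (-N)), m0 (η * χ) = m0 χ) :
    IsStepDual (Gsub M) (Gsub (-N)) (phiHat Gsub A m0 M N) := by
  refine ⟨fun χ hχ => Set.indicator_of_notMem hχ _, fun χ η hη => ?_⟩
  have hηM : η ∈ ann (Gsub M) := ann_anti (hanti (by omega)) hη
  simp only [phiHat, Set.indicator_apply, mul_mem_ann_iff hηM]
  refine if_congr Iff.rfl (prod_congr rfl fun j _ => ?_) rfl
  rw [dilDual_mul]
  exact hT1 _ _ (dilDual_neg_mem_ann hanti hA hη (by omega))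

lemma phiHat_eq_one (hanti : Antitone Gsub) (hA : ∀ n, (A : G → G) '' Gsub n = Gsub (n - 1))
    (hT3 : ∀ χ ∈ ann (Gsub (-N)), m0 χ = 1) {χ : DualG G} (hχ : χ ∈ ann (Gsub (-N))) :
    phiHat Gsub A m0 M N χ = 1 := by
  rw [phiHat, Set.indicator_of_mem (ann_anti (hanti (by omega)) hχ)]
  exact prod_eq_one fun j _ => hT3 _ (dilDual_neg_mem_ann hanti hA hχ (by omega))

lemma phiHat_refinement (hanti : Antitone Gsub) (hA : ∀ n, (A : G → G) '' Gsub n = Gsub (n - 1))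
    (hT3 : ∀ χ ∈ ann (Gsub (-N)), m0 χ = 1)
    (hzero : ∀ χ ∈ annShell Gsub (M + 1), maskProd A m0 χ (M + N + 1) = 0) (χ : DualG G) :
    phiHat Gsub A m0 M N χ = m0 χ * phiHat Gsub A m0 M N (dilDual A (-1) χ) := by
  have hdil : dilDual A (-1) χ ∈ ann (Gsub M) ↔ χ ∈ ann (Gsub (M + 1)) := by
    rw [dilDual_mem_ann_iff hA, sub_neg_eq_add]
  by_cases hχ1 : χ ∈ ann (Gsub (M + 1))
  · rw [phiHat, Set.indicator_of_mem (hdil.2 hχ1), ← maskProd_succ']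
    by_cases hχ : χ ∈ ann (Gsub M)
    · rw [Set.indicator_of_mem hχ, maskProd_succ,
        hT3 _ (dilDual_neg_mem_ann hanti hA hχ (by omega)), mul_one]
    · rw [Set.indicator_of_notMem hχ, hzero χ (by rw [annShell_add_one]; exact ⟨hχ1, hχ⟩)]
  · have hχ : χ ∉ ann (Gsub M) := fun h => hχ1 (ann_anti (hanti (by omega)) h)
    rw [phiHat, Set.indicator_of_notMem hχ, Set.indicator_of_notMem (mt hdil.1 hχ1),
      mul_zero]

end refinement

end

theorem mask_criterion_general
    {G : Type*} [AddCommGroup G]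
    (Gsub : ℤ → AddSubgroup G)
    (hchain : ∀ n : ℤ, (Gsub (n + 1) : Set G) ⊆ Gsub n)
    (A : AddAut G) (hA : ∀ n : ℤ, (A : G → G) '' (Gsub n) = Gsub (n - 1))
    (M N : ℕ) (m0 : DualG G → ℂ)
    (hT1 : ∀ χ : DualG G, ∀ η ∈ ann (Gsub (-(N : ℤ))), m0 (η * χ) = m0 χ)
    (hT3 : ∀ χ ∈ ann (Gsub (-(N : ℤ))), m0 χ = 1) :
    (∃ F : DualG G → ℂ,
        IsStepDual (Gsub (M : ℤ)) (Gsub (-(N : ℤ))) F ∧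
        (∀ χ ∈ ann (Gsub (-(N : ℤ))), F χ = 1) ∧
        ∀ χ : DualG G, F χ = m0 χ * F (dilDual A (-1) χ)) ↔
      (⋃ k ∈ Finset.Icc (-(N : ℤ) + 1) ((M : ℤ) + 1),
          dilDual A ((M : ℤ) + 1 - k) ''
            {χ : DualG G | χ ∈ ann (Gsub k) \ ann (Gsub (k - 1)) ∧ m0 χ = 0})
        = ann (Gsub ((M : ℤ) + 1)) \ ann (Gsub (M : ℤ)) := by
  have hanti : Antitone Gsub := antitone_int_of_succ_le hchain
  rw [← annShell_add_one]
  refine Iff.trans ?_ (biUnion_dilDual_maskZeros_eq_annShell_iff m0 hA M N).symm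
  constructor
  · rintro ⟨F, ⟨hFsupp, -⟩, hFone, hF⟩ χ hχ
    exact maskProd_eq_zero_of_refinement hanti hA hFsupp hFone hF hχ
  · intro hzero
    exact ⟨phiHat Gsub A m0 M N, isStepDual_phiHat hanti hA hT1,
      fun χ => phiHat_eq_one hanti hA hT3, phiHat_refinement hanti hA hT3 hzero⟩

/-- A function `m₀` satisfying (T1) constancy on cosets of `G₋ₙ^⊥`,
(T2) periodicity with periods `r₁^{α₁}⋯r_s^{α_s}`, (T3) `m₀ ≡ 1` on `G₋ₙ^⊥`, is the mask
of a refinement equation with a solution `φ̂ ∈ 𝔇₋ₙ(G_M^⊥)` iff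
`⋃_{k=-N+1}^{M+1} E_k A^{M+1−k} = G_{M+1}^⊥ \ G_M^⊥`,
where `E_k` is the zero set of `m₀` in `G_k^⊥ \ G_{k−1}^⊥`. -/
theorem mask_criterion
    {G : Type*} [AddCommGroup G] [TopologicalSpace G] [IsTopologicalAddGroup G]
    [LocallyCompactSpace G] [TotallyDisconnectedSpace G] [MeasurableSpace G]
    (Gsub : ℤ → AddSubgroup G)
    (hchain : ∀ n : ℤ, (Gsub (n + 1) : Set G) ⊆ Gsub n)
    (hcompact : ∀ n : ℤ, IsCompact (Gsub n : Set G))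
    (hopen : ∀ n : ℤ, IsOpen (Gsub n : Set G))
    (hunion : (⋃ n : ℤ, (Gsub n : Set G)) = Set.univ)
    (hinter : (⋂ n : ℤ, (Gsub n : Set G)) = {0})
    (μ : Measure G)
    (hμinv : ∀ (g : G) (s : Set G), μ ((g + ·) '' s) = μ s)
    (p : ℕ) (hp : p.Prime)
    (hindex : ∀ n : ℤ, (Gsub (n + 1)).relIndex (Gsub n) = p)
    (hμnorm : ∀ n : ℤ, μ (Gsub n : Set G) = (p : ℝ≥0∞) ^ (-n))
    (gen : ℤ → G) (hgen : ∀ n : ℤ, gen n ∈ (Gsub n : Set G) \ (Gsub (n + 1) : Set G))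
    (A : AddAut G) (hA : ∀ n : ℤ, (A : G → G) '' (Gsub n) = Gsub (n - 1))
    (hAgen : ∀ n : ℤ, A (gen n) = gen (n - 1))
    (hVil : ∀ n : ℤ, p • gen n = 0)
    (r : ℤ → DualG G)
    (hrmem : ∀ n : ℤ, r n ∈ ann (Gsub (n + 1)) \ ann (Gsub n))
    (hr : ∀ n k : ℤ, r n (gen k) =
      Circle.exp (2 * Real.pi * (if n = k then 1 else 0) / p))
    (M N : ℕ) (m0 : DualG G → ℂ)
    (hT1 : ∀ χ : DualG G, ∀ η ∈ ann (Gsub (-(N : ℤ))), m0 (η * χ) = m0 χ)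
    (hT2 : ∀ (χ : DualG G) (s : ℕ) (α : ℕ → ℕ), (∀ j, α j < p) →
      m0 (χ * ∏ j ∈ Finset.range s, (r ((j : ℤ) + 1)) ^ (α j)) = m0 χ)
    (hT3 : ∀ χ ∈ ann (Gsub (-(N : ℤ))), m0 χ = 1) :
    (∃ F : DualG G → ℂ,
        IsStepDual (Gsub (M : ℤ)) (Gsub (-(N : ℤ))) F ∧
        (∀ χ ∈ ann (Gsub (-(N : ℤ))), F χ = 1) ∧
        ∀ χ : DualG G, F χ = m0 χ * F (dilDual A (-1) χ)) ↔
      (⋃ k ∈ Finset.Icc (-(N : ℤ) + 1) ((M : ℤ) + 1),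
          dilDual A ((M : ℤ) + 1 - k) ''
            {χ : DualG G | χ ∈ ann (Gsub k) \ ann (Gsub (k - 1)) ∧ m0 χ = 0})
        = ann (Gsub ((M : ℤ) + 1)) \ ann (Gsub (M : ℤ)) :=
  mask_criterion_general Gsub hchain A hA M N m0 hT1 hT3
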